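/- arXiv:2207.06973 — 3 statements merged into one kernel-verified Lean document; each statement's English description precedes it below -/
import Mathlib

section
/- Let λ > 0 and v ≥ 0, and consider the single-sensor cost g(v) = (1/2)(1−λ)log(1 + v·w) − (1/2)log(1 + v/σ²) + (λ/2)·v·w with σ > 0 and w = (Σ_YY⁻¹)_{ii} satisfying 0 < w < 1/σ². Then the stationarity condition g'(v) = 0 admits the nonnegative solution v* = −σ²/2 + (1/2)·√(σ⁴ − 4(wσ² − 1)/(λw²)), and v* ≥ 0. -/
theorem stmt_3 (lam v σ w : ℝ) (hlam : 0 < lam) (hv : 0 ≤ v) (hσ : 0 < σ)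
    (hw : 0 < w) (hw' : w < 1 / σ ^ 2)
    (vstar : ℝ)
    (hvstar : vstar = -σ ^ 2 / 2 +
      (1 / 2) * Real.sqrt (σ ^ 4 - 4 * (w * σ ^ 2 - 1) / (lam * w ^ 2))) :
    HasDerivAt (fun v : ℝ =>
        (1 / 2) * (1 - lam) * Real.log (1 + v * w)
          - (1 / 2) * Real.log (1 + v / σ ^ 2) + (lam / 2) * v * w)
      0 vstar ∧ 0 ≤ vstar := by
  have hσ2 : (0:ℝ) < σ ^ 2 := by positivity
  have hws : w * σ ^ 2 < 1 := by
    have := (lt_div_iff₀ hσ2).mp hw'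
    linarith
  have hlw : (0:ℝ) < lam * w ^ 2 := by positivity
  set rad : ℝ := σ ^ 4 - 4 * (w * σ ^ 2 - 1) / (lam * w ^ 2) with hrad
  have hradge : σ ^ 4 ≤ rad := by
    have h1 : 4 * (w * σ ^ 2 - 1) / (lam * w ^ 2) ≤ 0 :=
      div_nonpos_of_nonpos_of_nonneg (by linarith) hlw.le
    rw [hrad]; linarith
  have hradnn : 0 ≤ rad := le_trans (by positivity) hradge
  set s : ℝ := Real.sqrt rad with hsdef
  have hs2 : s ^ 2 = rad := Real.sq_sqrt hradnn
  have hsnn : 0 ≤ s := Real.sqrt_nonneg rad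
  have hsge : σ ^ 2 ≤ s := by nlinarith
  have hvs : vstar = (s - σ ^ 2) / 2 := by rw [hvstar]; ring
  have hvstarnn : 0 ≤ vstar := by rw [hvs]; linarith
  -- key quadratic identity
  have key : lam * w ^ 2 * vstar ^ 2 + lam * w ^ 2 * σ ^ 2 * vstar + (w * σ ^ 2 - 1) = 0 := by
    have hs2' : lam * w ^ 2 * s ^ 2 = lam * w ^ 2 * σ ^ 4 - 4 * (w * σ ^ 2 - 1) := by
      rw [hs2, hrad]; field_simp
    rw [hvs]; nlinarith [hs2']
  have hpos1 : 0 < 1 + vstar * w := by nlinarith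
  have hpos2 : 0 < 1 + vstar / σ ^ 2 := by positivity
  constructor
  · have h1 : HasDerivAt (fun v : ℝ => 1 + v * w) w vstar := by
      simpa using ((hasDerivAt_id vstar).mul_const w).const_add (1:ℝ)
    have h2 : HasDerivAt (fun v : ℝ => 1 + v / σ ^ 2) (1 / σ ^ 2) vstar := by
      simpa [div_eq_mul_inv] using
        ((hasDerivAt_id vstar).mul_const (σ ^ 2)⁻¹).const_add (1:ℝ)
    have hlog1 := (h1.log hpos1.ne').const_mul ((1:ℝ) / 2 * (1 - lam))
    have hlog2 := (h2.log hpos2.ne').const_mul ((1:ℝ) / 2)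
    have hlin : HasDerivAt (fun v : ℝ => lam / 2 * v * w) (lam / 2 * w) vstar := by
      simpa using ((hasDerivAt_id vstar).const_mul (lam / 2)).mul_const w
    have H := (hlog1.sub hlog2).add hlin
    have hfun : (fun v : ℝ => (1:ℝ) / 2 * (1 - lam) * Real.log (1 + v * w)
        - 1 / 2 * Real.log (1 + v / σ ^ 2) + lam / 2 * v * w)
        = (fun v : ℝ => (1:ℝ) / 2 * (1 - lam) * Real.log (1 + v * w)
        - 1 / 2 * Real.log (1 + v / σ ^ 2) + lam / 2 * v * w) := rfl
    have hD : (1:ℝ) / 2 * (1 - lam) * (w / (1 + vstar * w))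
        - 1 / 2 * (1 / σ ^ 2 / (1 + vstar / σ ^ 2)) + lam / 2 * w = 0 := by
      have hne1 := hpos1.ne'
      have hne2 := hpos2.ne'
      field_simp
      nlinarith [key]
    rw [hD] at H
    exact H
  · exact hvstarnn
end

section
/- Let H be an m×n real matrix, Σ_XX positive semidefinite, σ > 0, and Σ_AA positive semidefinite. Then the mutual information I = (1/2)·log det(H·Σ_XX·Hᵀ·(Σ_AA + σ²I)⁻¹ + I) is nonnegative, and it is monotonically nonincreasing in Σ_AA in the Loewner order: if Σ_AA ⪯ Σ'_AA then I(Σ'_AA) ≤ I(Σ_AA). -/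
/-!
Put `B = H Σ_XX Hᵀ = Cᴴ C` and `N = Σ_AA + σ² I`. Sylvester's determinant identity turns
`det (B N⁻¹ + 1)` into `det (C N⁻¹ Cᴴ + 1)`, and `C N⁻¹ Cᴴ` is positive semidefinite, so the
determinant is at least `1`. Enlarging `Σ_AA` enlarges `N`, hence shrinks `N⁻¹` and `C N⁻¹ Cᴴ` in
the Loewner order, and the determinant is monotone on positive definite matrices.
-/

open Matrix
open scoped MatrixOrder

namespace Matrix

variable {ι : Type*} [Fintype ι] [DecidableEq ι]

theorem PosDef.inv_anti {N M : Matrix ι ι ℝ} (hN : N.PosDef) (hNM : N ≤ M) :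
    M⁻¹ ≤ N⁻¹ := by
  obtain ⟨B, hB, rfl⟩ : ∃ B, B.PosSemidef ∧ M = N + B := ⟨M - N, hNM, by abel⟩
  have hM : (N + B).PosDef := hN.add_posSemidef hB
  have hNu := (isUnit_iff_isUnit_det N).mp hN.isUnit
  have hMu := (isUnit_iff_isUnit_det _).mp hM.isUnit
  -- `N⁻¹ - M⁻¹ = M⁻¹ B N⁻¹` and `N⁻¹ = (1 + N⁻¹ B) M⁻¹`, with `M = N + B`
  have hdiff :
      N⁻¹ - (N + B)⁻¹ = (N + B)⁻¹ * (B + Bᴴ * N⁻¹ * B) * (N + B)⁻¹ᴴ := by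
    have h1 : B + B * N⁻¹ * B = B * N⁻¹ * (N + B) := by
      rw [Matrix.mul_add, Matrix.mul_assoc B N⁻¹ N, nonsing_inv_mul N hNu, Matrix.mul_one,
        Matrix.mul_assoc]
    have h2 : (N + B)⁻¹ * ((N + B) - N) * N⁻¹ = N⁻¹ - (N + B)⁻¹ := by
      rw [Matrix.mul_sub, Matrix.sub_mul, nonsing_inv_mul _ hMu, Matrix.one_mul, Matrix.mul_assoc,
        mul_nonsing_inv N hNu, Matrix.mul_one]
    rw [add_sub_cancel_left] at h2
    rw [hB.1.eq, hM.posSemidef.inv.1.eq, h1, ← h2]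
    simp only [Matrix.mul_assoc, mul_nonsing_inv _ hMu, Matrix.mul_one]
  rw [le_iff, hdiff]
  exact (hB.add (hN.posSemidef.inv.conjTranspose_mul_mul_same B)).mul_mul_conjTranspose_same _

theorem PosSemidef.one_le_det_add_one {P : Matrix ι ι ℝ} (hP : P.PosSemidef) :
    1 ≤ (P + 1).det := by
  have hP1 : (P + 1).IsHermitian := (hP.add PosSemidef.one).1
  rw [hP1.det_eq_prod_eigenvalues]
  refine Finset.one_le_prod fun i _ => ?_
  -- every eigenvalue of `P + 1` lies in `1 + spectrum P ⊆ [1, ∞)`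
  have hmem : hP1.eigenvalues i - 1 + 1 ∈ spectrum ℝ (algebraMap ℝ _ 1 + P) := by
    simpa [add_comm P] using hP1.eigenvalues_mem_spectrum_real i
  simpa using spectrum_nonneg_of_nonneg hP.nonneg (spectrum.add_mem_add_iff.mp hmem)

theorem PosSemidef.one_le_det_mul_add_one {A B : Matrix ι ι ℝ} (hA : A.PosSemidef)
    (hB : B.PosSemidef) : 1 ≤ (A * B + 1).det := by
  obtain ⟨C, rfl⟩ := CStarAlgebra.nonneg_iff_eq_star_mul_self.mp hB.nonneg
  rw [← Matrix.mul_assoc, det_mul_add_one_comm, star_eq_conjTranspose, ← Matrix.mul_assoc]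
  exact (hA.mul_mul_conjTranspose_same C).one_le_det_add_one

theorem PosDef.det_le_det {A B : Matrix ι ι ℝ} (hA : A.PosDef) (hAB : A ≤ B) :
    A.det ≤ B.det := by
  obtain ⟨D, hD, rfl⟩ : ∃ D, D.PosSemidef ∧ B = A + D := ⟨B - A, hAB, by abel⟩
  have hAu := (isUnit_iff_isUnit_det A).mp hA.isUnit
  have hfac : A + D = A * (A⁻¹ * D + 1) := by
    rw [Matrix.mul_add, ← Matrix.mul_assoc, mul_nonsing_inv A hAu, Matrix.one_mul, Matrix.mul_one,
      add_comm]
  rw [hfac, det_mul]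
  exact le_mul_of_one_le_right hA.det_pos.le (hA.posSemidef.inv.one_le_det_mul_add_one hD)

theorem PosSemidef.det_mul_inv_add_one_le_of_le {B N M : Matrix ι ι ℝ} (hB : B.PosSemidef)
    (hN : N.PosDef) (hNM : N ≤ M) : (B * M⁻¹ + 1).det ≤ (B * N⁻¹ + 1).det := by
  obtain ⟨C, rfl⟩ := CStarAlgebra.nonneg_iff_eq_star_mul_self.mp hB.nonneg
  simp only [star_eq_conjTranspose, Matrix.mul_assoc Cᴴ C, det_mul_add_one_comm Cᴴ]
  have hM : M.PosDef := by simpa using hN.add_posSemidef hNM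
  refine PosDef.det_le_det
    (.posSemidef_add (hM.posSemidef.inv.mul_mul_conjTranspose_same C) .one) ?_
  have h := star_left_conjugate_le_conjugate (hN.inv_anti hNM) Cᴴ
  rw [star_eq_conjTranspose, conjTranspose_conjTranspose] at h
  exact add_le_add_left h 1

end Matrix

theorem stmt_7 {m n : ℕ} (H : Matrix (Fin m) (Fin n) ℝ)
    (Sxx : Matrix (Fin n) (Fin n) ℝ) (hSxx : Sxx.PosSemidef)
    (σ : ℝ) (hσ : 0 < σ)
    (MI : Matrix (Fin m) (Fin m) ℝ → ℝ)
    (hMI : ∀ Saa, MI Saa = (1 / 2) * Real.log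
        (H * Sxx * H.transpose * (Saa + σ ^ 2 • (1 : Matrix (Fin m) (Fin m) ℝ))⁻¹
          + 1).det) :
    (∀ Saa : Matrix (Fin m) (Fin m) ℝ, Saa.PosSemidef → 0 ≤ MI Saa) ∧
      (∀ Saa Saa' : Matrix (Fin m) (Fin m) ℝ, Saa.PosSemidef →
        (Saa' - Saa).PosSemidef → MI Saa' ≤ MI Saa) := by
  have hB : (H * Sxx * H.transpose).PosSemidef := by
    simpa [conjTranspose_eq_transpose_of_trivial] using hSxx.mul_mul_conjTranspose_same H
  have hN : ∀ Saa : Matrix (Fin m) (Fin m) ℝ, Saa.PosSemidef → (Saa + σ ^ 2 • 1).PosDef :=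
    fun Saa hSaa => PosDef.posSemidef_add hSaa (PosDef.one.smul (by positivity))
  refine ⟨fun Saa hSaa => ?_, fun Saa Saa' hSaa hle => ?_⟩
  · rw [hMI]
    exact mul_nonneg (by norm_num)
      (Real.log_nonneg (hB.one_le_det_mul_add_one (hN Saa hSaa).posSemidef.inv))
  · have hSaa' : Saa'.PosSemidef := (hSaa.nonneg.trans hle).posSemidef
    have hone_le := hB.one_le_det_mul_add_one (hN Saa' hSaa').posSemidef.inv
    have hle_det := hB.det_mul_inv_add_one_le_of_le (hN Saa hSaa)
      (add_le_add_left (le_iff.mpr hle) _)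
    rw [hMI, hMI]
    exact mul_le_mul_of_nonneg_left (Real.log_le_log (by linarith) hle_det) (by norm_num)
end

section
/- Let Σ_YY be an m×m positive definite matrix and let N = H·Σ_XX·Hᵀ ⪰ 0 with Σ_YY = N + σ²I, σ > 0. For λ ≥ 1, the minimum over all positive semidefinite Σ_AA of the form v·e_i·e_iᵀ (v ≥ 0 fixed, i varying) of the quantity (1−λ)·log det(Σ_YY + v·e_i e_iᵀ) + λ·(tr(Σ_YY⁻¹·v·e_i e_iᵀ)) − log det(v·e_i e_iᵀ + σ²I) is attained at an index i minimizing (Σ_YY⁻¹)_{ii}. Equivalently: argmin over i of (1−λ)log(1 + v(Σ_YY⁻¹)_{ii}) + λ v (Σ_YY⁻¹)_{ii} equals argmin over i of (Σ_YY⁻¹)_{ii}, for every λ ≥ 0 and v > 0. -/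
/-!
Since `Σ_YY = N + σ² I` is positive semidefinite, so is `Σ_YY⁻¹`, and its diagonal entries are
nonnegative. On `[0, ∞)` the cost `t ↦ (1 - λ) log (1 + v t) + λ v t` is strictly increasing:
it is `log (1 + v t) + λ (v t - log (1 + v t))`, and `x - log (1 + x)` is monotone because
`log y ≤ y - 1`. So comparing costs is the same as comparing diagonal entries.
-/

open Real Set

lemma monotoneOn_sub_log_one_add : MonotoneOn (fun x : ℝ => x - log (1 + x)) (Ici 0) := by
  intro x (hx : 0 ≤ x) y (_ : 0 ≤ y) hxy
  have hratio : log ((1 + y) / (1 + x)) ≤ (1 + y) / (1 + x) - 1 :=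
    log_le_sub_one_of_pos (by positivity)
  have hx1 : (0 : ℝ) < 1 + x := by positivity
  rw [log_div (by positivity) hx1.ne'] at hratio
  have : (1 + y) / (1 + x) - 1 ≤ y - x := by
    rw [div_sub_one hx1.ne', div_le_iff₀ hx1]
    nlinarith
  linarith

/-- The paper's cost of attacking a sensor whose entry of `Σ_YY⁻¹` is `t`, with variance `v`. -/
noncomputable def attackCost (lam v t : ℝ) : ℝ := (1 - lam) * log (1 + v * t) + lam * v * t

lemma strictMonoOn_attackCost {lam v : ℝ} (hlam : 0 ≤ lam) (hv : 0 < v) :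
    StrictMonoOn (attackCost lam v) (Ici 0) := by
  have hlog : StrictMonoOn (fun t : ℝ => log (1 + v * t)) (Ici 0) := by
    intro s (hs : 0 ≤ s) t _ hst
    exact log_lt_log (by positivity) (by gcongr)
  have hgap : MonotoneOn (fun t : ℝ => lam * (v * t - log (1 + v * t))) (Ici 0) := by
    intro s (hs : 0 ≤ s) t (ht : 0 ≤ t) hst
    have := monotoneOn_sub_log_one_add (mem_Ici.2 (by positivity : 0 ≤ v * s))
      (mem_Ici.2 (by positivity : 0 ≤ v * t)) (by gcongr)
    exact mul_le_mul_of_nonneg_left this hlam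
  convert hlog.add_monotone hgap using 1
  ext t
  simp only [attackCost]
  ring

theorem stmt_8_general {m : ℕ} (N Syy : Matrix (Fin m) (Fin m) ℝ) (hN : N.PosSemidef)
    (σ : ℝ)
    (hSyy : Syy = N + σ ^ 2 • (1 : Matrix (Fin m) (Fin m) ℝ))
    (lam v : ℝ) (hlam : 0 ≤ lam) (hv : 0 < v) (i : Fin m) :
    (∀ j : Fin m, Syy⁻¹ i i ≤ Syy⁻¹ j j) ↔
      (∀ j : Fin m,
        (1 - lam) * Real.log (1 + v * Syy⁻¹ i i) + lam * v * Syy⁻¹ i i ≤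
          (1 - lam) * Real.log (1 + v * Syy⁻¹ j j) + lam * v * Syy⁻¹ j j) := by
  have hSyy_psd : Syy.PosSemidef := hSyy ▸ hN.add (Matrix.PosSemidef.one.smul (sq_nonneg σ))
  have hdiag : ∀ j, Syy⁻¹ j j ∈ Ici (0 : ℝ) := fun j => hSyy_psd.inv.diag_nonneg
  have hcost := strictMonoOn_attackCost hlam hv
  exact forall_congr' fun j => (hcost.le_iff_le (hdiag i) (hdiag j)).symm

theorem stmt_8 {m : ℕ} (N Syy : Matrix (Fin m) (Fin m) ℝ) (hN : N.PosSemidef)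
    (σ : ℝ) (hσ : 0 < σ)
    (hSyy : Syy = N + σ ^ 2 • (1 : Matrix (Fin m) (Fin m) ℝ))
    (lam v : ℝ) (hlam : 0 ≤ lam) (hv : 0 < v) (i : Fin m) :
    (∀ j : Fin m, Syy⁻¹ i i ≤ Syy⁻¹ j j) ↔
      (∀ j : Fin m,
        (1 - lam) * Real.log (1 + v * Syy⁻¹ i i) + lam * v * Syy⁻¹ i i ≤
          (1 - lam) * Real.log (1 + v * Syy⁻¹ j j) + lam * v * Syy⁻¹ j j) :=
  stmt_8_general N Syy hN σ hSyy lam v hlam hv i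
end
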